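/- arXiv:1912.12447 — 2 statements merged into one kernel-verified Lean document; each statement's English description precedes it below -/
import Mathlib

section
/- Let f : [a₁, a₂] → ℝ and g : [b₁, b₂] → ℝ be continuous, piecewise linear, strictly increasing functions. For α ∈ [a₁ + b₁, a₂ + b₂], define B(α) = {(α₁, α₂) : α₁ ∈ [a₁, a₂], α₂ ∈ [b₁, b₂], α₁ + α₂ = α} and M(α) = min over (α₁, α₂) ∈ B(α) of max(f(α₁), g(α₂)). Then M is well-defined (the minimum exists), continuous, and monotonically nondecreasing on [a₁ + b₁, a₂ + b₂]. -/
/-- `f` is piecewise linear on `[a, b]` with finitely many pieces. -/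
def PiecewiseLinearOn (f : ℝ → ℝ) (a b : ℝ) : Prop :=
  ∃ (n : ℕ) (c : Fin (n + 1) → ℝ), Monotone c ∧ c 0 = a ∧ c (Fin.last n) = b ∧
    ∀ i : Fin n, ∃ m q : ℝ, ∀ x ∈ Set.Icc (c i.castSucc) (c i.succ), f x = m * x + q

/-!
The minimum exists because `B α` is compact and nonempty. Any point of `B α` can be moved to a
point of `B α'` that is comparable to it coordinatewise and at sup-distance at most `|α' - α|`.
Moving down from an optimal point of `B α'` with `α ≤ α'` and using that `f`, `g` are monotone
shows `M α ≤ M α'`; moving an optimal point of `B α` to `B α'` and using the uniform continuity of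
`max (f p.1) (g p.2)` on the compact box shows `M α' < M α + ε` for `α'` near `α`, in both
directions, hence continuity.
-/

/-- `B α`, with the box `[a₁, a₂] × [b₁, b₂]` as the order interval `Set.Icc (a₁, b₁) (a₂, b₂)`. -/
def boxAntidiagonal (a b : ℝ × ℝ) (α : ℝ) : Set (ℝ × ℝ) :=
  {p ∈ Set.Icc a b | p.1 + p.2 = α}

section Fibres

variable {ι X β : Type*}

lemma monotoneOn_of_isLeast_of_exists_le [Preorder ι] [Preorder X] [Preorder β]
    {F : X → β} {K : Set X} {S : ι → Set X} {m : ι → β} {I : Set ι}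
    (hF : MonotoneOn F K) (hSK : ∀ i, S i ⊆ K) (hm : ∀ i ∈ I, IsLeast (F '' S i) (m i))
    (hdown : ∀ i ∈ I, ∀ j ∈ I, i ≤ j → ∀ q ∈ S j, ∃ p ∈ S i, p ≤ q) :
    MonotoneOn m I := by
  intro i hi j hj hij
  obtain ⟨q, hq, hFq⟩ := (hm j hj).1
  obtain ⟨p, hp, hpq⟩ := hdown i hi j hj hij q hq
  calc m i ≤ F p := (hm i hi).2 ⟨p, hp, rfl⟩
    _ ≤ F q := hF (hSK i hp) (hSK j hq) hpq
    _ = m j := hFq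

lemma continuousOn_of_isLeast_of_exists_dist_le [PseudoMetricSpace ι] [PseudoMetricSpace X]
    {F : X → ℝ} {K : Set X} {S : ι → Set X} {m : ι → ℝ} {I : Set ι}
    (hF : UniformContinuousOn F K) (hSK : ∀ i, S i ⊆ K) (hm : ∀ i ∈ I, IsLeast (F '' S i) (m i))
    (hclose : ∀ i ∈ I, ∀ j ∈ I, ∀ p ∈ S i, ∃ q ∈ S j, dist q p ≤ dist j i) :
    ContinuousOn m I := by
  refine Metric.continuousOn_iff.2 fun i hi ε hε => ?_
  obtain ⟨δ, hδ, hFδ⟩ := Metric.uniformContinuousOn_iff.1 hF ε hε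
  have upper : ∀ i ∈ I, ∀ j ∈ I, dist j i < δ → m j < m i + ε := by
    intro i hi j hj hji
    obtain ⟨p, hp, hFp⟩ := (hm i hi).1
    obtain ⟨q, hq, hqp⟩ := hclose i hi j hj p hp
    have hFqp := hFδ q (hSK j hq) p (hSK i hp) (hqp.trans_lt hji)
    rw [Real.dist_eq] at hFqp
    calc m j ≤ F q := (hm j hj).2 ⟨q, hq, rfl⟩
      _ < F p + ε := by linarith [(abs_lt.1 hFqp).2]
      _ = m i + ε := by rw [hFp]
  refine ⟨δ, hδ, fun j hj hji => ?_⟩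
  rw [Real.dist_eq, abs_sub_lt_iff]
  have := upper j hj i hi (by rwa [dist_comm])
  exact ⟨by linarith [upper i hi j hj hji], by linarith⟩

end Fibres

lemma dist_le_add_sub_add_of_le {p q : ℝ × ℝ} (hpq : p ≤ q) :
    dist q p ≤ q.1 + q.2 - (p.1 + p.2) := by
  rw [Prod.dist_eq, Real.dist_eq, Real.dist_eq, abs_of_nonneg (sub_nonneg.2 hpq.1),
    abs_of_nonneg (sub_nonneg.2 hpq.2)]
  exact max_le (by linarith [hpq.2]) (by linarith [hpq.1])

namespace boxAntidiagonal

variable {a b p : ℝ × ℝ} {α α' : ℝ}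

lemma subset_Icc (a b : ℝ × ℝ) (α : ℝ) : boxAntidiagonal a b α ⊆ Set.Icc a b :=
  Set.sep_subset _ _

lemma isCompact (a b : ℝ × ℝ) (α : ℝ) : IsCompact (boxAntidiagonal a b α) :=
  isCompact_Icc.inter_right (isClosed_eq (continuous_fst.add continuous_snd) continuous_const)

lemma exists_ge (hp : p ∈ boxAntidiagonal a b α) (hαα' : α ≤ α') (hα' : α' ≤ b.1 + b.2) :
    ∃ q ∈ boxAntidiagonal a b α', p ≤ q := by
  obtain ⟨⟨⟨hap1, hap2⟩, hpb1, hpb2⟩, hpα⟩ := hp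
  set x := min b.1 (p.1 + (α' - α))
  have hxb : x ≤ b.1 := min_le_left _ _
  have hxp : x ≤ p.1 + (α' - α) := min_le_right _ _
  have hpx : p.1 ≤ x := le_min hpb1 (by linarith)
  have hx : α' - b.2 ≤ x := le_min (by linarith) (by linarith)
  refine ⟨(x, α' - x), ⟨⟨⟨?_, ?_⟩, ?_, ?_⟩, ?_⟩, ?_, ?_⟩ <;> dsimp only <;> linarith

lemma exists_le (hp : p ∈ boxAntidiagonal a b α) (hα'α : α' ≤ α) (hα' : a.1 + a.2 ≤ α') :
    ∃ q ∈ boxAntidiagonal a b α', q ≤ p := by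
  obtain ⟨⟨⟨hap1, hap2⟩, hpb1, hpb2⟩, hpα⟩ := hp
  set x := max a.1 (p.1 - (α - α'))
  have hax : a.1 ≤ x := le_max_left _ _
  have hpx : p.1 - (α - α') ≤ x := le_max_right _ _
  have hxp : x ≤ p.1 := max_le hap1 (by linarith)
  have hx : x ≤ α' - a.2 := max_le (by linarith) (by linarith)
  refine ⟨(x, α' - x), ⟨⟨⟨?_, ?_⟩, ?_, ?_⟩, ?_⟩, ?_, ?_⟩ <;> dsimp only <;> linarith

lemma nonempty (hab : a ≤ b) (hα : α ∈ Set.Icc (a.1 + a.2) (b.1 + b.2)) :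
    (boxAntidiagonal a b α).Nonempty :=
  let ⟨q, hq, _⟩ := exists_ge (p := a) ⟨Set.left_mem_Icc.2 hab, rfl⟩ hα.1 hα.2
  ⟨q, hq⟩

lemma exists_dist_le (hp : p ∈ boxAntidiagonal a b α)
    (hα' : α' ∈ Set.Icc (a.1 + a.2) (b.1 + b.2)) :
    ∃ q ∈ boxAntidiagonal a b α', dist q p ≤ dist α' α := by
  rcases le_total α α' with hαα' | hα'α
  · obtain ⟨q, hq, hpq⟩ := exists_ge hp hαα' hα'.2
    refine ⟨q, hq, (dist_le_add_sub_add_of_le hpq).trans ?_⟩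
    rw [hq.2, hp.2]
    exact le_abs_self _
  · obtain ⟨q, hq, hqp⟩ := exists_le hp hα'α hα'.1
    refine ⟨q, hq, ?_⟩
    rw [dist_comm, dist_comm α']
    refine (dist_le_add_sub_add_of_le hqp).trans ?_
    rw [hq.2, hp.2]
    exact le_abs_self _

end boxAntidiagonal

theorem minmax_over_line_in_box_is_monotone_continuous_general
    (a1 a2 b1 b2 : ℝ) (ha : a1 ≤ a2) (hb : b1 ≤ b2)
    (f g : ℝ → ℝ)
    (hfc : ContinuousOn f (Set.Icc a1 a2))
    (hfm : StrictMonoOn f (Set.Icc a1 a2))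
    (hgc : ContinuousOn g (Set.Icc b1 b2))
    (hgm : StrictMonoOn g (Set.Icc b1 b2))
    (B : ℝ → Set (ℝ × ℝ))
    (hB : ∀ α, B α = {p | p.1 ∈ Set.Icc a1 a2 ∧ p.2 ∈ Set.Icc b1 b2 ∧ p.1 + p.2 = α})
    (M : ℝ → ℝ)
    (hM : ∀ α, M α = sInf ((fun p : ℝ × ℝ => max (f p.1) (g p.2)) '' B α)) :
    (∀ α ∈ Set.Icc (a1 + b1) (a2 + b2), ∃ p ∈ B α, max (f p.1) (g p.2) = M α) ∧
    ContinuousOn M (Set.Icc (a1 + b1) (a2 + b2)) ∧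
    MonotoneOn M (Set.Icc (a1 + b1) (a2 + b2)) := by
  set F := fun p : ℝ × ℝ => max (f p.1) (g p.2)
  have hBeq : B = boxAntidiagonal (a1, b1) (a2, b2) := by
    ext α p
    simp only [hB, boxAntidiagonal, Set.Icc_prod_eq, Set.mem_prod, Set.mem_ofPred_eq, and_assoc]
  subst hBeq
  have hFc : ContinuousOn F (Set.Icc (a1, b1) (a2, b2)) := by
    rw [Set.Icc_prod_eq]
    exact (hfc.comp continuousOn_fst Set.mapsTo_fst_prod).sup
      (hgc.comp continuousOn_snd Set.mapsTo_snd_prod)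
  have hFm : MonotoneOn F (Set.Icc (a1, b1) (a2, b2)) := by
    rw [Set.Icc_prod_eq]
    exact fun p hp q hq hpq =>
      max_le_max (hfm.monotoneOn hp.1 hq.1 hpq.1) (hgm.monotoneOn hp.2 hq.2 hpq.2)
  have hleast : ∀ α ∈ Set.Icc (a1 + b1) (a2 + b2),
      IsLeast (F '' boxAntidiagonal (a1, b1) (a2, b2) α) (M α) := fun α hα => by
    rw [hM]
    exact ((boxAntidiagonal.isCompact _ _ α).image_of_continuousOn
      (hFc.mono (boxAntidiagonal.subset_Icc _ _ α))).isLeast_sInf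
      ((boxAntidiagonal.nonempty ⟨ha, hb⟩ hα).image F)
  refine ⟨fun α hα => (hleast α hα).1, ?_, ?_⟩
  · exact continuousOn_of_isLeast_of_exists_dist_le
      (isCompact_Icc.uniformContinuousOn_of_continuous hFc) (boxAntidiagonal.subset_Icc _ _)
      hleast fun α _ α' hα' p hp => boxAntidiagonal.exists_dist_le hp hα'
  · exact monotoneOn_of_isLeast_of_exists_le hFm (boxAntidiagonal.subset_Icc _ _) hleast
      fun α hα _ _ hαα' q hq => boxAntidiagonal.exists_le hq hαα' hα.1

theorem minmax_over_line_in_box_is_monotone_continuous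
    (a1 a2 b1 b2 : ℝ) (ha : a1 ≤ a2) (hb : b1 ≤ b2)
    (f g : ℝ → ℝ)
    (hfc : ContinuousOn f (Set.Icc a1 a2)) (hfpl : PiecewiseLinearOn f a1 a2)
    (hfm : StrictMonoOn f (Set.Icc a1 a2))
    (hgc : ContinuousOn g (Set.Icc b1 b2)) (hgpl : PiecewiseLinearOn g b1 b2)
    (hgm : StrictMonoOn g (Set.Icc b1 b2))
    (B : ℝ → Set (ℝ × ℝ))
    (hB : ∀ α, B α = {p | p.1 ∈ Set.Icc a1 a2 ∧ p.2 ∈ Set.Icc b1 b2 ∧ p.1 + p.2 = α})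
    (M : ℝ → ℝ)
    (hM : ∀ α, M α = sInf ((fun p : ℝ × ℝ => max (f p.1) (g p.2)) '' B α)) :
    (∀ α ∈ Set.Icc (a1 + b1) (a2 + b2), ∃ p ∈ B α, max (f p.1) (g p.2) = M α) ∧
    ContinuousOn M (Set.Icc (a1 + b1) (a2 + b2)) ∧
    MonotoneOn M (Set.Icc (a1 + b1) (a2 + b2)) :=
  minmax_over_line_in_box_is_monotone_continuous_general a1 a2 b1 b2 ha hb f g hfc hfm hgc hgm B hB
    M hM
end

section
/- Let w : Fin (n+1) → ℝ≥0 be vertex weights, x : Fin (n+1) → ℝ strictly increasing vertex positions, and c : Fin n → ℝ>0 edge capacities. Define for a point p and vertex index i with x i < p: g_i(p) = (p − x i) + W_{0,i} / c(i, p) if W_{0,i} > 0 and g_i(p) = 0 otherwise, where W_{0,i} = Σ_{t ≤ i} w t and c(i, p) = min of capacities c_t over edges t between vertex i and the first vertex at or beyond p. Define Θ_L(p) = max over {i : x i < p} of g_i(p). Then Θ_L is monotonically nondecreasing in p on [x 0, x n]. -/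
theorem left_evacuation_time_monotone (n : ℕ)
    (w : Fin (n + 1) → ℝ) (hw : ∀ i, 0 ≤ w i)
    (x : Fin (n + 1) → ℝ) (hx : StrictMono x)
    (c : Fin n → ℝ) (hc : ∀ t, 0 < c t)
    -- cumulative weights W_{0,i}
    (W : Fin (n + 1) → ℝ)
    (hW : ∀ i, W i = ∑ t ∈ Finset.univ.filter (fun t => t ≤ i), w t)
    -- minimum capacity between vertex i and the first vertex at or beyond p
    (cap : Fin (n + 1) → ℝ → ℝ)
    (hcap : ∀ (i : Fin (n + 1)) (p : ℝ)
      (h : (Finset.univ.filter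
        (fun t : Fin n => (i : ℕ) ≤ (t : ℕ) ∧ x t.castSucc < p)).Nonempty),
      cap i p = (Finset.univ.filter
        (fun t : Fin n => (i : ℕ) ≤ (t : ℕ) ∧ x t.castSucc < p)).inf' h c)
    (g : Fin (n + 1) → ℝ → ℝ)
    (hg : ∀ i p, g i p = if 0 < W i then (p - x i) + W i / cap i p else 0)
    (ThetaL : ℝ → ℝ)
    (hT : ∀ p, ThetaL p =
      (insert (0 : ℝ)
        ((Finset.univ.filter (fun i : Fin (n + 1) => x i < p)).image (fun i => g i p))).max'
        (Finset.insert_nonempty _ _)) :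
    MonotoneOn ThetaL (Set.Icc (x 0) (x (Fin.last n))) := by
  intro p hp q hq hpq
  rw [hT p, hT q]
  apply Finset.max'_le
  intro y hy
  rcases Finset.mem_insert.mp hy with h0 | him
  · subst h0
    exact Finset.le_max' _ _ (Finset.mem_insert_self _ _)
  · obtain ⟨i, hi, rfl⟩ := Finset.mem_image.mp him
    have hip : x i < p := (Finset.mem_filter.mp hi).2
    have hiq : x i < q := lt_of_lt_of_le hip hpq
    have hmemq : g i q ∈ insert (0 : ℝ)
        ((Finset.univ.filter (fun j : Fin (n + 1) => x j < q)).image (fun j => g j q)) := by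
      exact Finset.mem_insert_of_mem (Finset.mem_image.mpr
        ⟨i, Finset.mem_filter.mpr ⟨Finset.mem_univ _, hiq⟩, rfl⟩)
    refine le_trans ?_ (Finset.le_max' _ _ hmemq)
    -- g i p ≤ g i q
    rw [hg i p, hg i q]
    by_cases hWi : 0 < W i
    · simp only [if_pos hWi]
      -- i < n since x i < p ≤ x (last n)
      have hin : (i : ℕ) < n := by
        by_contra h
        have : i = Fin.last n := Fin.ext (le_antisymm (Nat.lt_succ_iff.mp i.isLt)
          (Nat.le_of_not_lt h))
        rw [this] at hip
        exact absurd (lt_of_lt_of_le hip hp.2) (lt_irrefl _)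
      set t : Fin n := ⟨(i : ℕ), hin⟩ with ht
      have htc : t.castSucc = i := Fin.ext rfl
      have hmem : ∀ r : ℝ, x i < r →
          t ∈ Finset.univ.filter (fun s : Fin n => (i : ℕ) ≤ (s : ℕ) ∧ x s.castSucc < r) := by
        intro r hr
        exact Finset.mem_filter.mpr ⟨Finset.mem_univ _, le_refl _, by rw [htc]; exact hr⟩
      have hnep : (Finset.univ.filter
          (fun s : Fin n => (i : ℕ) ≤ (s : ℕ) ∧ x s.castSucc < p)).Nonempty :=
        ⟨t, hmem p hip⟩
      have hneq : (Finset.univ.filter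
          (fun s : Fin n => (i : ℕ) ≤ (s : ℕ) ∧ x s.castSucc < q)).Nonempty :=
        ⟨t, hmem q hiq⟩
      rw [hcap i p hnep, hcap i q hneq]
      have hsub : ∀ s ∈ Finset.univ.filter
          (fun s : Fin n => (i : ℕ) ≤ (s : ℕ) ∧ x s.castSucc < p),
          s ∈ Finset.univ.filter
          (fun s : Fin n => (i : ℕ) ≤ (s : ℕ) ∧ x s.castSucc < q) := by
        intro s hs
        obtain ⟨_, h1, h2⟩ := Finset.mem_filter.mp hs
        exact Finset.mem_filter.mpr ⟨Finset.mem_univ _, h1, lt_of_lt_of_le h2 hpq⟩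
      have hle : (Finset.univ.filter
          (fun s : Fin n => (i : ℕ) ≤ (s : ℕ) ∧ x s.castSucc < q)).inf' hneq c ≤
          (Finset.univ.filter
          (fun s : Fin n => (i : ℕ) ≤ (s : ℕ) ∧ x s.castSucc < p)).inf' hnep c := by
        apply Finset.le_inf'
        intro b hb
        exact Finset.inf'_le _ (hsub b hb)
      have hposq : 0 < (Finset.univ.filter
          (fun s : Fin n => (i : ℕ) ≤ (s : ℕ) ∧ x s.castSucc < q)).inf' hneq c := by
        obtain ⟨b, _, hb⟩ := Finset.exists_mem_eq_inf' hneq c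
        rw [hb]; exact hc b
      have hdiv : W i / (Finset.univ.filter
          (fun s : Fin n => (i : ℕ) ≤ (s : ℕ) ∧ x s.castSucc < p)).inf' hnep c ≤
          W i / (Finset.univ.filter
          (fun s : Fin n => (i : ℕ) ≤ (s : ℕ) ∧ x s.castSucc < q)).inf' hneq c :=
        div_le_div_of_nonneg_left hWi.le hposq hle
      linarith
    · simp only [if_neg hWi, le_refl]
end
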